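/- arXiv:2310.07013 — 2 statements merged into one kernel-verified Lean document; each statement's English description precedes it below -/
import Mathlib

section
/- Let n ≥ 3 be an integer, let D be a division ring whose characteristic is either 0 or greater than n, let F be the center of D, and let R = M_m(D) with m ≥ 2. Suppose f, g : R → R are additive maps satisfying f(X) + X^n · g(X⁻¹) = 0 for every invertible X ∈ R. Then f(X) = 0 and g(X) = 0 for every matrix X ∈ M_m(D) all of whose entries lie in F. -/
open Matrix

section Stmt18Aux

variable {D : Type*} [DivisionRing D] {m : ℕ}

private lemma aux_central_mul_smul {c : D} (hc : ∀ x : D, x * c = c * x)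
    (M N : Matrix (Fin m) (Fin m) D) : M * (c • N) = c • (M * N) := by
  ext a b
  simp only [Matrix.mul_apply, Matrix.smul_apply, smul_eq_mul, Finset.mul_sum]
  refine Finset.sum_congr rfl fun l _ => ?_
  rw [← mul_assoc, hc (M a l), mul_assoc]

private lemma aux_smul_cancel {d : D} (hd : d ≠ 0) {M : Matrix (Fin m) (Fin m) D}
    (h : d • M = 0) : M = 0 := by
  ext a b
  have h2 := congrFun (congrFun h a) b
  simp only [Matrix.smul_apply, smul_eq_mul, Matrix.zero_apply] at h2 ⊢
  exact (mul_eq_zero.mp h2).resolve_left hd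

private lemma aux_cast_ne_zero {n : ℕ} (hchar : ringChar D = 0 ∨ n < ringChar D)
    {k : ℕ} (hk1 : 1 ≤ k) (hkn : k ≤ n) : (k : D) ≠ 0 := by
  rcases hchar with h0 | hp
  · haveI : CharP D 0 := h0 ▸ ringChar.charP D
    haveI : CharZero D := CharP.charP_to_charZero D
    exact Nat.cast_ne_zero.mpr (by omega)
  · haveI : CharP D (ringChar D) := ringChar.charP D
    intro h0
    rw [CharP.cast_eq_zero_iff D (ringChar D) k] at h0
    have := Nat.le_of_dvd (by omega) h0
    omega

private lemma aux_exists_good (n : ℕ) (hn : 3 ≤ n)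
    (hchar : ringChar D = 0 ∨ n < ringChar D) :
    ∃ k : ℕ, 1 ≤ k ∧ k ≤ n ∧ (k : D) ^ (n - 2) ≠ 1 := by
  rcases hchar with h0 | hp
  · haveI : CharP D 0 := h0 ▸ ringChar.charP D
    haveI : CharZero D := CharP.charP_to_charZero D
    refine ⟨2, by omega, by omega, ?_⟩
    have h2 : ((2 ^ (n - 2) : ℕ) : D) ≠ ((1 : ℕ) : D) := by
      refine Nat.cast_injective.ne ?_
      have : 2 ≤ 2 ^ (n - 2) := by
        have : 0 < n - 2 := by omega
        calc 2 = 2 ^ 1 := (pow_one 2).symm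
        _ ≤ 2 ^ (n - 2) := Nat.pow_le_pow_right (by omega) (by omega)
      omega
    simpa using h2
  · by_contra hcon
    push_neg at hcon
    set p := ringChar D with hpdef
    haveI : CharP D p := ringChar.charP D
    have hprime : p.Prime := by
      rcases CharP.char_is_prime_or_zero D p with hh | hh
      · exact hh
      · omega
    haveI : Fact p.Prime := ⟨hprime⟩
    have hinj : Function.Injective (ZMod.castHom (dvd_refl p) D) :=
      (ZMod.castHom (dvd_refl p) D).injective
    have key : ∀ k : ℕ, 1 ≤ k → k ≤ n → ((k : ZMod p)) ^ (n - 2) = 1 := by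
      intro k h1 h2
      apply hinj
      rw [map_pow, map_natCast, _root_.map_one]
      exact hcon k h1 h2
    have hsubset : (Finset.Icc 1 n).image (fun k : ℕ => (k : ZMod p)) ⊆
        (Polynomial.nthRoots (n - 2) (1 : ZMod p)).toFinset := by
      intro x hx
      simp only [Finset.mem_image, Finset.mem_Icc] at hx
      obtain ⟨k, ⟨h1, h2⟩, rfl⟩ := hx
      rw [Multiset.mem_toFinset, Polynomial.mem_nthRoots (by omega)]
      exact key k h1 h2
    have hcard : ((Finset.Icc 1 n).image (fun k : ℕ => (k : ZMod p))).card = n := by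
      rw [Finset.card_image_of_injOn, Nat.card_Icc]
      · omega
      · intro a ha b hb hab
        simp only [Finset.coe_Icc, Set.mem_Icc] at ha hb
        have ha' : a < p := by omega
        have hb' : b < p := by omega
        have hv := congrArg ZMod.val hab
        rwa [ZMod.val_natCast_of_lt ha', ZMod.val_natCast_of_lt hb'] at hv
    have hle := Finset.card_le_card hsubset
    have hle2 := (Polynomial.nthRoots (n - 2) (1 : ZMod p)).toFinset_card_le
    have hle3 := Polynomial.card_nthRoots (n - 2) (1 : ZMod p)
    omega

private lemma aux_vand {n : ℕ} (hn : 3 ≤ n) (hchar : ringChar D = 0 ∨ n < ringChar D)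
    (A B : Matrix (Fin m) (Fin m) D)
    (H : ∀ k : ℕ, 1 ≤ k → k ≤ n → A + ((k : D) ^ (n - 2)) • B = 0) : A = 0 := by
  have h1 := H 1 le_rfl (by omega)
  rw [Nat.cast_one, one_pow, one_smul] at h1
  obtain ⟨k, hk1, hkn, hkne⟩ := aux_exists_good n hn hchar
  have h2 := H k hk1 hkn
  have hA : A = -B := eq_neg_of_add_eq_zero_left h1
  rw [hA, neg_add_eq_sub] at h2
  rw [show ((k : D) ^ (n - 2)) • B - B = ((k : D) ^ (n - 2) - 1) • B by
    rw [sub_smul, one_smul]] at h2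
  have hB : B = 0 := aux_smul_cancel (sub_ne_zero.mpr hkne) h2
  rw [hA, hB, neg_zero]

private lemma aux_shuffle {R : Type*} [Ring R] (k n : ℕ) (W a b : R)
    (hab : (k : R) * a = b) :
    (k : R) * ((k : R) ^ n * W * a) = (k : R) ^ n * (W * b) := by
  calc (k : R) * ((k : R) ^ n * W * a)
      = ((k : R) * ((k : R) ^ n * W)) * a := (mul_assoc _ _ _).symm
    _ = (((k : R) ^ n * W) * (k : R)) * a := by
        rw [(Nat.cast_commute k ((k : R) ^ n * W)).eq]
    _ = ((k : R) ^ n * W) * ((k : R) * a) := mul_assoc _ _ _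
    _ = ((k : R) ^ n * W) * b := by rw [hab]
    _ = (k : R) ^ n * (W * b) := mul_assoc _ _ _

/-- The key step: `f` vanishes on every invertible matrix. -/
private lemma aux_funit (n : ℕ) (hn : 3 ≤ n)
    (hchar : ringChar D = 0 ∨ n < ringChar D)
    (f g : Matrix (Fin m) (Fin m) D → Matrix (Fin m) (Fin m) D)
    (hf : ∀ X Y, f (X + Y) = f X + f Y) (hg : ∀ X Y, g (X + Y) = g X + g Y)
    (h : ∀ X : (Matrix (Fin m) (Fin m) D)ˣ,
      f (Units.val X) + (Units.val X) ^ n * g (Units.val X⁻¹) = 0)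
    (P Q : Matrix (Fin m) (Fin m) D) (hPQ : P * Q = 1) (hQP : Q * P = 1) :
    f P = 0 := by
  apply aux_vand hn hchar (f P) (P ^ n * g Q)
  intro k hk1 hkn
  have hkD : (k : D) ≠ 0 := aux_cast_ne_zero hchar hk1 hkn
  have hkc : ∀ x : D, x * (k : D) = (k : D) * x :=
    fun x => ((Nat.cast_commute k x).eq).symm
  have hkinv : ∀ x : D, x * ((k : D))⁻¹ = ((k : D))⁻¹ * x :=
    fun x => (((Nat.cast_commute k x).inv_left₀).eq).symm
  have huv : ((k : D) • P) * (((k : D))⁻¹ • Q) = 1 := by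
    rw [Matrix.smul_mul, aux_central_mul_smul hkinv, hPQ, smul_smul,
      mul_inv_cancel₀ hkD, one_smul]
  have hvu : (((k : D))⁻¹ • Q) * ((k : D) • P) = 1 := by
    rw [Matrix.smul_mul, aux_central_mul_smul hkc, hQP, smul_smul,
      inv_mul_cancel₀ hkD, one_smul]
  have hX := h ⟨(k : D) • P, ((k : D))⁻¹ • Q, huv, hvu⟩
  have hXu : Units.val (⟨(k : D) • P, ((k : D))⁻¹ • Q, huv, hvu⟩ :
      (Matrix (Fin m) (Fin m) D)ˣ) = (k : D) • P := rfl
  have hXv : Units.val (⟨(k : D) • P, ((k : D))⁻¹ • Q, huv, hvu⟩ :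
      (Matrix (Fin m) (Fin m) D)ˣ)⁻¹ = ((k : D))⁻¹ • Q := rfl
  rw [hXu, hXv] at hX
  -- hX : f ((k:D) • P) + ((k:D) • P) ^ n * g ((k:D)⁻¹ • Q) = 0
  have hu' : (k : D) • P = ((k : ℕ) : Matrix (Fin m) (Fin m) D) * P := by
    rw [Nat.cast_smul_eq_nsmul D, nsmul_eq_mul]
  have hfu : f ((k : D) • P) = ((k : ℕ) : Matrix (Fin m) (Fin m) D) * f P := by
    rw [Nat.cast_smul_eq_nsmul D, ← nsmul_eq_mul]
    exact (AddMonoidHom.mk' f hf).map_nsmul k P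
  have hgv : ((k : ℕ) : Matrix (Fin m) (Fin m) D) * g (((k : D))⁻¹ • Q) = g Q := by
    rw [← nsmul_eq_mul]
    have hkv : (k : ℕ) • (((k : D))⁻¹ • Q) = Q := by
      rw [← Nat.cast_smul_eq_nsmul D, smul_smul, mul_inv_cancel₀ hkD, one_smul]
    calc (k : ℕ) • g (((k : D))⁻¹ • Q)
        = g ((k : ℕ) • (((k : D))⁻¹ • Q)) :=
          ((AddMonoidHom.mk' g hg).map_nsmul k (((k : D))⁻¹ • Q)).symm
      _ = g Q := by rw [hkv]
  have hun : ((k : D) • P) ^ n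
      = ((k : ℕ) : Matrix (Fin m) (Fin m) D) ^ n * P ^ n := by
    rw [hu', Commute.mul_pow (Nat.cast_commute k P)]
  have step : ((k : ℕ) : Matrix (Fin m) (Fin m) D) * f ((k : D) • P)
      + ((k : ℕ) : Matrix (Fin m) (Fin m) D)
        * (((k : D) • P) ^ n * g (((k : D))⁻¹ • Q)) = 0 := by
    rw [← mul_add, hX, mul_zero]
  rw [hfu, ← mul_assoc, ← Nat.cast_mul, hun,
    aux_shuffle k n (P ^ n) (g (((k : D))⁻¹ • Q)) (g Q) hgv,
    ← Nat.cast_pow] at step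
  rw [← nsmul_eq_mul, ← nsmul_eq_mul] at step
  -- step : (k*k) • f P + (k^n) • (P^n * g Q) = 0
  have hpow : (k ^ n : ℕ) = (k * k) * k ^ (n - 2) := by
    rw [mul_assoc, ← pow_succ', ← pow_succ']
    congr 1
    omega
  rw [hpow] at step
  rw [show (k * k * k ^ (n - 2)) • (P ^ n * g Q)
      = (k * k) • (k ^ (n - 2) • (P ^ n * g Q)) from mul_smul _ _ _,
    ← smul_add] at step
  have hkk : ((k * k : ℕ) : D) ≠ 0 := by
    push_cast
    exact mul_ne_zero hkD hkD
  have final := aux_smul_cancel hkk (by rw [Nat.cast_smul_eq_nsmul]; exact step)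
  rw [← Nat.cast_smul_eq_nsmul D, Nat.cast_pow] at final
  exact final

private lemma aux_swap (n : ℕ)
    (f g : Matrix (Fin m) (Fin m) D → Matrix (Fin m) (Fin m) D)
    (h : ∀ X : (Matrix (Fin m) (Fin m) D)ˣ,
      f (Units.val X) + (Units.val X) ^ n * g (Units.val X⁻¹) = 0) :
    ∀ X : (Matrix (Fin m) (Fin m) D)ˣ,
      g (Units.val X) + (Units.val X) ^ n * f (Units.val X⁻¹) = 0 := by
  intro X
  have hX := h X⁻¹
  rw [inv_inv] at hX
  have hval : (Units.val X) ^ n * (Units.val X⁻¹) ^ n = 1 := by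
    rw [← Units.val_pow_eq_pow_val, ← Units.val_pow_eq_pow_val, ← Units.val_mul,
      inv_pow, mul_inv_cancel, Units.val_one]
  have h2 := congrArg (fun z => (Units.val X) ^ n * z) hX
  simp only [mul_add, mul_zero, ← mul_assoc] at h2
  rw [hval, one_mul] at h2
  rw [add_comm]
  exact h2

private lemma aux_main (n : ℕ) (hn : 3 ≤ n)
    (hchar : ringChar D = 0 ∨ n < ringChar D)
    (f g : Matrix (Fin m) (Fin m) D → Matrix (Fin m) (Fin m) D)
    (hf : ∀ X Y, f (X + Y) = f X + f Y) (hg : ∀ X Y, g (X + Y) = g X + g Y)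
    (h : ∀ X : (Matrix (Fin m) (Fin m) D)ˣ,
      f (Units.val X) + (Units.val X) ^ n * g (Units.val X⁻¹) = 0) :
    ∀ X : Matrix (Fin m) (Fin m) D, f X = 0 := by
  have hone : f 1 = 0 := aux_funit n hn hchar f g hf hg h 1 1 (one_mul 1) (one_mul 1)
  have hoff : ∀ (i j : Fin m), j ≠ i → ∀ c : D, f (Matrix.single i j c) = 0 := by
    intro i j hij c
    have hN2 : Matrix.single i j c * Matrix.single i j c = 0 :=
      Matrix.single_mul_single_of_ne (c := c) i j i hij c
    have hPQ : (1 + Matrix.single i j c) * (1 - Matrix.single i j c) = 1 := by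
      rw [mul_sub, mul_one, add_mul, one_mul, hN2, add_zero]
      abel
    have hQP : (1 - Matrix.single i j c) * (1 + Matrix.single i j c) = 1 := by
      rw [sub_mul, one_mul, mul_add, mul_one, hN2, add_zero]
      abel
    have hP := aux_funit n hn hchar f g hf hg h _ _ hPQ hQP
    have hadd := hf 1 (Matrix.single i j c)
    rw [hone, zero_add] at hadd
    rw [← hadd]
    exact hP
  have hdiagP : ∀ (i : Fin m) (d : D), d ≠ 0 →
      f (Matrix.single i i (d - 1)) = 0 := by
    intro i d hd
    have prod : ∀ e : D, e ≠ 0 →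
        (1 + Matrix.single i i (e - 1)) * (1 + Matrix.single i i (e⁻¹ - 1)) = 1 := by
      intro e he
      have e1 : (e - 1) * (e⁻¹ - 1) = 1 - e⁻¹ - (e - 1) := by
        rw [mul_sub, sub_mul, mul_inv_cancel₀ he, one_mul, mul_one]
      rw [mul_add, mul_one, add_mul, one_mul, Matrix.single_mul_single_same, e1, add_assoc,
        ← Matrix.single_add, ← Matrix.single_add]
      have harg : (e - 1) + ((e⁻¹ - 1) + (1 - e⁻¹ - (e - 1))) = 0 := by abel
      rw [harg, Matrix.single_zero, add_zero]
    have hPQ := prod d hd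
    have hQP : (1 + Matrix.single i i (d⁻¹ - 1))
        * (1 + Matrix.single i i (d - 1)) = 1 := by
      have := prod d⁻¹ (inv_ne_zero hd)
      rwa [inv_inv] at this
    have hP := aux_funit n hn hchar f g hf hg h _ _ hPQ hQP
    have hadd := hf 1 (Matrix.single i i (d - 1))
    rw [hone, zero_add] at hadd
    rw [← hadd]
    exact hP
  have hdiag : ∀ (i : Fin m) (c : D), f (Matrix.single i i c) = 0 := by
    intro i c
    by_cases hc : c + 1 = 0
    · have hceq : c = 1 + (-2 : D) := by
        have hcm : c = -1 := eq_neg_of_add_eq_zero_left hc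
        rw [hcm]
        norm_num
      have h2ne : (2 : D) ≠ 0 := by
        have := aux_cast_ne_zero (n := n) hchar (k := 2) (by omega) (by omega)
        simpa using this
      have h1 : f (Matrix.single i i (1 : D)) = 0 := by
        have := hdiagP i 2 h2ne
        norm_num at this
        exact this
      have hm2 : f (Matrix.single i i (-2 : D)) = 0 := by
        have hne : (-1 : D) ≠ 0 := by
          simp
        have := hdiagP i (-1) hne
        norm_num at this
        exact this
      rw [hceq, Matrix.single_add, hf, h1, hm2, add_zero]
    · have := hdiagP i (c + 1) hc
      rwa [add_sub_cancel_right] at this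
  intro X
  have Fsum : ∀ {ι : Type} (s : Finset ι) (M : ι → Matrix (Fin m) (Fin m) D),
      f (∑ a ∈ s, M a) = ∑ a ∈ s, f (M a) := by
    intro ι s M
    exact map_sum (AddMonoidHom.mk' f hf) M s
  rw [matrix_eq_sum_single X, Fsum]
  refine Finset.sum_eq_zero fun i _ => ?_
  rw [Fsum]
  refine Finset.sum_eq_zero fun j _ => ?_
  by_cases hij : j = i
  · subst hij
    exact hdiag j (X j j)
  · exact hoff i j hij (X i j)

end Stmt18Aux

/-- Step 7: `f(X) = 0 = g(X)` for every matrix `X` whose entries all lie in the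
center of `D`. -/
theorem stmt_18 (n m : ℕ) (hn : 3 ≤ n) (hm : 2 ≤ m) (D : Type*) [DivisionRing D]
    (hchar : ringChar D = 0 ∨ n < ringChar D)
    (f g : Matrix (Fin m) (Fin m) D → Matrix (Fin m) (Fin m) D)
    (hf : ∀ X Y, f (X + Y) = f X + f Y)
    (hg : ∀ X Y, g (X + Y) = g X + g Y)
    (h : ∀ X : (Matrix (Fin m) (Fin m) D)ˣ,
      f (Units.val X) + (Units.val X) ^ n * g (Units.val X⁻¹) = 0) :
    ∀ X : Matrix (Fin m) (Fin m) D, (∀ i j, X i j ∈ Subring.center D) →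
      f X = 0 ∧ g X = 0 := by
  intro X _
  exact ⟨aux_main n hn hchar f g hf hg h X,
    aux_main n hn hchar g f hg hf (aux_swap n f g h) X⟩
end

section
/- Let n ≥ 3 be an integer, let D be a division ring whose characteristic is either 0 or greater than n, and let R = M_m(D) with m ≥ 2. Suppose f, g : R → R are additive maps satisfying f(X) + X^n · g(X⁻¹) = 0 for every invertible X ∈ R. Then f(β E_ij) = 0 and g(β E_ij) = 0 for every β ∈ D and all indices i ≠ j. -/
open Matrix

private lemma mul_smul_central {m : ℕ} {D : Type*} [DivisionRing D] {a : D}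
    (comm : ∀ d : D, Commute a d) (M N : Matrix (Fin m) (Fin m) D) :
    M * (a • N) = a • (M * N) := by
  ext x y
  simp only [Matrix.mul_apply, Matrix.smul_apply, smul_eq_mul, Finset.mul_sum]
  exact Finset.sum_congr rfl fun l _ => by
    rw [← mul_assoc, ← (comm (M x l)).eq, mul_assoc]

private lemma unip_pow {R : Type*} [Ring R] (N : R) (hN : N * N = 0) (k : ℕ) :
    (1 + N) ^ k = 1 + k • N := by
  induction k with
  | zero => simp
  | succ k ih =>
      rw [pow_succ, ih, add_mul, one_mul, mul_one_add, smul_mul_assoc, hN, smul_zero,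
        add_zero, succ_nsmul]
      abel

private lemma smul_pow_central {m : ℕ} {D : Type*} [DivisionRing D] {a : D}
    (comm : ∀ d : D, Commute a d) (M : Matrix (Fin m) (Fin m) D) (k : ℕ) :
    (a • M) ^ k = a ^ k • M ^ k := by
  induction k with
  | zero => simp
  | succ k ih =>
      rw [pow_succ, ih, smul_mul_assoc, mul_smul_central comm, smul_smul, ← pow_succ, pow_succ M]

private lemma smul_cancel {D : Type*} [DivisionRing D] {M : Type*} [AddCommGroup M]
    [Module D M] {a : D} (ha : a ≠ 0) {x : M} (h : a • x = 0) : x = 0 := by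
  have := congrArg (a⁻¹ • ·) h
  simpa [smul_smul, inv_mul_cancel₀ ha] using this

private lemma unit_aux {m : ℕ} {D : Type*} [DivisionRing D] (a : D) (ha : a ≠ 0)
    (comm : ∀ d : D, Commute a d) (N : Matrix (Fin m) (Fin m) D) (hN : N * N = 0) :
    ∃ X : (Matrix (Fin m) (Fin m) D)ˣ,
      Units.val X = a • (1 + N) ∧ Units.val X⁻¹ = a⁻¹ • (1 - N) := by
  have comm' : ∀ d : D, Commute a⁻¹ d := fun d => (comm d).inv_left₀
  have h1 : (1 + N) * (1 - N) = 1 := by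
    rw [add_mul, one_mul, mul_one_sub, hN, sub_zero, sub_add_cancel]
  have h2 : (1 - N) * (1 + N) = 1 := by
    rw [sub_mul, one_mul, mul_one_add, hN, add_zero, add_sub_cancel_right]
  refine ⟨⟨a • (1 + N), a⁻¹ • (1 - N), ?_, ?_⟩, rfl, rfl⟩
  · rw [smul_mul_assoc, mul_smul_central comm', smul_smul, mul_inv_cancel₀ ha, h1, one_smul]
  · rw [smul_mul_assoc, mul_smul_central comm, smul_smul, inv_mul_cancel₀ ha, h2, one_smul]

private lemma char_aux (n : ℕ) (hn : 3 ≤ n) (D : Type*) [DivisionRing D]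
    (hchar : ringChar D = 0 ∨ n < ringChar D) :
    ∃ t : ℕ, (t : D) ≠ 0 ∧ (t : D) ^ (n - 2) ≠ 1 := by
  rcases hchar with h0 | hp
  · haveI : CharP D 0 := h0 ▸ ringChar.charP D
    haveI : CharZero D := CharP.charP_to_charZero D
    refine ⟨2, by exact_mod_cast (by norm_num : ((2:ℕ):D) ≠ 0), fun hcontra => ?_⟩
    have : ((2 ^ (n - 2) : ℕ) : D) = ((1 : ℕ) : D) := by push_cast; simpa using hcontra
    have h2 : (2 : ℕ) ^ (n - 2) = 1 := Nat.cast_injective this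
    have : 1 ≤ n - 2 := by omega
    have := Nat.one_lt_two_pow_iff.mpr (by omega : n - 2 ≠ 0)
    omega
  · have hp' : (ringChar D).Prime := by
      rcases CharP.char_is_prime_or_zero D (ringChar D) with h | h
      · exact h
      · omega
    set p := ringChar D with hpdef
    by_contra hcon
    push_neg at hcon
    have hmod : ∀ t : ℕ, 1 ≤ t → t ≤ n → ((t : ZMod p)) ^ (n - 2) = 1 := by
      intro t h1 h2
      have htD : (t : D) ≠ 0 := by
        intro hz
        have hdvd : p ∣ t := (ringChar.spec D t).mp hz
        have := Nat.le_of_dvd (by omega) hdvd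
        omega
      have hD : ((t ^ (n - 2) : ℕ) : D) = ((1 : ℕ) : D) := by
        push_cast
        simpa using hcon t htD
      haveI : CharP D p := ringChar.charP D
      have hM : t ^ (n - 2) ≡ 1 [MOD p] := (CharP.natCast_eq_natCast D p).mp hD
      have : ((t ^ (n - 2) : ℕ) : ZMod p) = ((1 : ℕ) : ZMod p) :=
        (ZMod.natCast_eq_natCast_iff _ _ _).mpr hM
      push_cast at this
      simpa using this
    haveI : Fact p.Prime := ⟨hp'⟩
    classical
    set Q : Polynomial (ZMod p) := Polynomial.X ^ (n - 2) - Polynomial.C 1 with hQ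
    have hQ0 : Q ≠ 0 := Polynomial.X_pow_sub_C_ne_zero (by omega) 1
    have hsub : ((Finset.Icc 1 n).image (fun t : ℕ => (t : ZMod p))) ⊆ Q.roots.toFinset := by
      intro x hx
      simp only [Finset.mem_image, Finset.mem_Icc] at hx
      obtain ⟨t, ⟨h1, h2⟩, rfl⟩ := hx
      rw [Multiset.mem_toFinset, Polynomial.mem_roots hQ0]
      simp [hQ, Polynomial.IsRoot, sub_eq_zero, hmod t h1 h2]
    have hinj : Set.InjOn (fun t : ℕ => (t : ZMod p)) ↑(Finset.Icc 1 n) := by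
      intro a ha b hb hab
      simp only [Finset.coe_Icc, Set.mem_Icc] at ha hb
      have : a ≡ b [MOD p] := (ZMod.natCast_eq_natCast_iff _ _ _).mp hab
      unfold Nat.ModEq at this
      rw [Nat.mod_eq_of_lt (by omega), Nat.mod_eq_of_lt (by omega)] at this
      exact this
    have hcard : ((Finset.Icc 1 n).image (fun t : ℕ => (t : ZMod p))).card = n := by
      rw [Finset.card_image_of_injOn hinj, Nat.card_Icc]; omega
    have hle := Finset.card_le_card hsub
    have hdeg : Q.roots.toFinset.card ≤ n - 2 := by
      refine le_trans (Multiset.toFinset_card_le _) (le_trans (Polynomial.card_roots' Q) ?_)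
      rw [hQ, Polynomial.natDegree_X_pow_sub_C]
    omega
private lemma master_eq {m n : ℕ} {D : Type*} [DivisionRing D]
    (F G : Matrix (Fin m) (Fin m) D →+ Matrix (Fin m) (Fin m) D)
    (h : ∀ X : (Matrix (Fin m) (Fin m) D)ˣ,
      F (Units.val X) + (Units.val X) ^ n * G (Units.val X⁻¹) = 0)
    {i j : Fin m} (hij : i ≠ j) (a : D) (ha : a ≠ 0) (comm : ∀ d : D, Commute a d) (b : D) :
    F (a • 1) + F (Matrix.single i j (a * b))
      + a ^ n • G (a⁻¹ • 1) - a ^ n • G (Matrix.single i j (a⁻¹ * b))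
      + n • (a ^ n • (Matrix.single i j b * G (a⁻¹ • 1)))
      - n • (a ^ n • (Matrix.single i j b * G (Matrix.single i j (a⁻¹ * b)))) = 0 := by
  set N := Matrix.single i j b with hNdef
  have hNN : N * N = 0 := Matrix.single_mul_single_of_ne b i j i (Ne.symm hij) b
  obtain ⟨X, hXv, hXi⟩ := unit_aux a ha comm N hNN
  have hX := h X
  rw [hXv, hXi] at hX
  have e1 : a • ((1 : Matrix (Fin m) (Fin m) D) + N) = a • 1 + Matrix.single i j (a * b) := by
    rw [smul_add, hNdef, Matrix.smul_single, smul_eq_mul]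
  have e2 : a⁻¹ • ((1 : Matrix (Fin m) (Fin m) D) - N) = a⁻¹ • 1 - Matrix.single i j (a⁻¹ * b) := by
    rw [smul_sub, hNdef, Matrix.smul_single, smul_eq_mul]
  have e3 : (a • ((1 : Matrix (Fin m) (Fin m) D) + N)) ^ n = a ^ n • (1 + n • N) := by
    rw [smul_pow_central comm, unip_pow N hNN]
  rw [e3, e1, e2, map_add, map_sub] at hX
  -- expand the big product
  have e4 : (a ^ n • ((1 : Matrix (Fin m) (Fin m) D) + n • N)) *
      (G (a⁻¹ • 1) - G (Matrix.single i j (a⁻¹ * b)))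
      = a ^ n • G (a⁻¹ • 1) - a ^ n • G (Matrix.single i j (a⁻¹ * b))
        + n • (a ^ n • (N * G (a⁻¹ • 1)))
        - n • (a ^ n • (N * G (Matrix.single i j (a⁻¹ * b)))) := by
    rw [smul_mul_assoc, add_mul, one_mul, smul_mul_assoc, mul_sub, smul_sub, smul_add,
      smul_sub, smul_sub, smul_comm (a ^ n) n, smul_comm (a ^ n) n]
    abel
  rw [e4] at hX
  rw [← hX]
  abel

/-- Step 8: `f(βE_ij) = 0 = g(βE_ij)` for every `β ∈ D` and all `i ≠ j`. -/
theorem stmt_19 (n m : ℕ) (hn : 3 ≤ n) (hm : 2 ≤ m) (D : Type*) [DivisionRing D]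
    (hchar : ringChar D = 0 ∨ n < ringChar D)
    (f g : Matrix (Fin m) (Fin m) D → Matrix (Fin m) (Fin m) D)
    (hf : ∀ X Y, f (X + Y) = f X + f Y)
    (hg : ∀ X Y, g (X + Y) = g X + g Y)
    (h : ∀ X : (Matrix (Fin m) (Fin m) D)ˣ,
      f (Units.val X) + (Units.val X) ^ n * g (Units.val X⁻¹) = 0) :
    ∀ (β : D) (i j : Fin m), i ≠ j →
      f (Matrix.single i j β) = 0 ∧ g (Matrix.single i j β) = 0 := by
  classical
  set F : Matrix (Fin m) (Fin m) D →+ Matrix (Fin m) (Fin m) D := AddMonoidHom.mk' f hf with hFdef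
  set G : Matrix (Fin m) (Fin m) D →+ Matrix (Fin m) (Fin m) D := AddMonoidHom.mk' g hg with hGdef
  have hFG : ∀ X : (Matrix (Fin m) (Fin m) D)ˣ,
      F (Units.val X) + (Units.val X) ^ n * G (Units.val X⁻¹) = 0 := fun X => h X
  -- characteristic facts
  have hcast : ∀ k : ℕ, 0 < k → k ≤ n → (k : D) ≠ 0 := by
    intro k hk1 hk2 hk0
    have hdvd := (ringChar.spec D k).mp hk0
    rcases hchar with h0 | hp
    · rw [h0] at hdvd
      omega
    · have := Nat.le_of_dvd hk1 hdvd
      omega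
  have hnD : (n : D) ≠ 0 := hcast n (by omega) le_rfl
  have h2D : ((2 : ℕ) : D) ≠ 0 := hcast 2 (by omega) (by omega)
  obtain ⟨t, hc, htpow⟩ := char_aux n hn D hchar
  set c : D := (t : D) with hcdef
  have comm : ∀ d : D, Commute c d := fun d => Nat.cast_commute t d
  have comm' : ∀ d : D, Commute c⁻¹ d := fun d => (comm d).inv_left₀
  have hcn : c ^ n ≠ 0 := pow_ne_zero n hc
  -- E(-b) = -E b
  have hEneg : ∀ (i' j' : Fin m) (b : D),
      Matrix.single i' j' (-b) = -Matrix.single i' j' b := by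
    intro i' j' b
    ext x y
    simp [Matrix.single, Matrix.neg_apply, apply_ite (fun z : D => -z)]
  have hEsmul : ∀ (i' j' : Fin m) (a b : D),
      a • Matrix.single i' j' b = Matrix.single i' j' (a * b) := by
    intro i' j' a b
    rw [Matrix.smul_single, smul_eq_mul]
  have hFsmul : ∀ X, F (c • X) = c • F X := by
    intro X
    rw [hcdef, Nat.cast_smul_eq_nsmul, map_nsmul, ← Nat.cast_smul_eq_nsmul D]
  have hGsmul : ∀ X, G (c • X) = c • G X := by
    intro X
    rw [hcdef, Nat.cast_smul_eq_nsmul, map_nsmul, ← Nat.cast_smul_eq_nsmul D]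
  -- Step A
  have hA : F 1 + G 1 = 0 := by
    have := hFG 1
    simpa using this
  have hG1 : G 1 = -F 1 := eq_neg_of_add_eq_zero_right hA
  -- Step B : E b * G (E b) = 0
  have hB : ∀ (i' j' : Fin m), i' ≠ j' → ∀ b : D,
      Matrix.single i' j' b * G (Matrix.single i' j' b) = 0 := by
    intro i' j' hij' b
    have e1 := master_eq F G hFG hij' 1 one_ne_zero (fun d => Commute.one_left d) b
    have e2 := master_eq F G hFG hij' 1 one_ne_zero (fun d => Commute.one_left d) (-b)
    simp only [one_smul, inv_one, one_pow, one_mul, hEneg, map_neg, mul_neg, neg_mul,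
      smul_neg, neg_neg, sub_neg_eq_add, hG1] at e1 e2
    have h12 := congrArg₂ (fun x y => -x + -y) e1 e2
    simp only [neg_zero, add_zero] at h12
    apply smul_cancel (show ((2 * n : ℕ) : D) ≠ 0 from by
      push_cast
      push_cast at h2D
      exact mul_ne_zero h2D hnD)
    rw [Nat.cast_smul_eq_nsmul, mul_smul, two_smul ℕ, ← h12]
    abel
  -- canonical index pair
  have hij01 : (⟨0, by omega⟩ : Fin m) ≠ (⟨1, by omega⟩ : Fin m) := by
    simp [Fin.ext_iff]
  -- value of G (c⁻¹ • 1)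
  have hFc1 : F (c • (1 : Matrix (Fin m) (Fin m) D)) = c • F 1 := hFsmul 1
  have hγ : G (c⁻¹ • (1 : Matrix (Fin m) (Fin m) D)) = -(((c ^ n)⁻¹ * c) • F 1) := by
    have m0 := master_eq F G hFG hij01 c hc comm 0
    simp only [mul_zero, Matrix.single_zero, map_zero, zero_mul, mul_zero,
      smul_zero, sub_zero, add_zero] at m0
    rw [hFc1] at m0
    have h1 : c ^ n • G (c⁻¹ • (1 : Matrix (Fin m) (Fin m) D)) = -(c • F 1) :=
      eq_neg_of_add_eq_zero_right m0
    have h2 := congrArg (fun z => (c ^ n)⁻¹ • z) h1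
    simp only [smul_smul, inv_mul_cancel₀ hcn, one_smul, smul_neg] at h2
    exact h2
  -- (†') : F(E(c*b)) - c^n • G(E(c⁻¹*b)) - n•(c•(E b * F 1)) = 0
  have comms : ∀ d : D, Commute ((c ^ n)⁻¹ * c) d :=
    fun d => (((comm d).pow_left n).inv_left₀).mul_left (comm d)
  have hC : ∀ (i' j' : Fin m), i' ≠ j' → ∀ b : D,
      F (Matrix.single i' j' (c * b))
        - c ^ n • G (Matrix.single i' j' (c⁻¹ * b))
        - n • (c • (Matrix.single i' j' b * F 1)) = 0 := by
    intro i' j' hij' b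
    have e := master_eq F G hFG hij' c hc comm b
    rw [hFc1, hγ] at e
    -- term3 : c^n • (-(s•F1)) = -(c•F1)
    rw [smul_neg, smul_smul, mul_inv_cancel_left₀ hcn] at e
    -- term5 : n•(c^n•(E b * -(s•F1)))
    rw [mul_neg, mul_smul_central comms, smul_neg, smul_smul, mul_inv_cancel_left₀ hcn,
      smul_neg] at e
    -- term6 : E b = c • E(c⁻¹ b), then hB kills it
    have hEb : Matrix.single i' j' b
        = c • Matrix.single i' j' (c⁻¹ * b) := by
      rw [hEsmul, mul_inv_cancel_left₀ hc]
    have ht6 : Matrix.single i' j' b * G (Matrix.single i' j' (c⁻¹ * b)) = 0 := by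
      rw [hEb, smul_mul_assoc, hB i' j' hij' (c⁻¹ * b), smul_zero]
    rw [ht6, smul_zero, smul_zero, sub_zero] at e
    rw [← e]
    abel
  -- (††) : F(E b) - G(E b) - n•(E b * F 1) = 0
  have hD : ∀ (i' j' : Fin m), i' ≠ j' → ∀ b : D,
      F (Matrix.single i' j' b) - G (Matrix.single i' j' b)
        - n • (Matrix.single i' j' b * F 1) = 0 := by
    intro i' j' hij' b
    have e := master_eq F G hFG hij' 1 one_ne_zero (fun d => Commute.one_left d) b
    simp only [one_smul, inv_one, one_pow, one_mul, hG1, mul_neg, smul_neg] at e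
    rw [hB i' j' hij' b, smul_zero, sub_zero] at e
    rw [← e]
    abel
  -- g vanishes on off-diagonal rank ones
  have hscal1 : c ^ n - c * c ≠ 0 := by
    rw [sub_ne_zero]
    intro heq
    apply htpow
    have h1 : c * c * c ^ (n - 2) = c * c * 1 := by
      rw [mul_one, ← pow_two, ← pow_add, show 2 + (n - 2) = n by omega, pow_two]
      exact heq
    exact mul_left_cancel₀ (mul_ne_zero hc hc) h1
  have hGzero : ∀ (i' j' : Fin m), i' ≠ j' → ∀ b : D,
      G (Matrix.single i' j' b) = 0 := by
    intro i' j' hij' b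
    have e5 := hC i' j' hij' (c * b)
    rw [inv_mul_cancel_left₀ hc] at e5
    rw [← hEsmul i' j' c (c * b), ← hEsmul i' j' c b, smul_mul_assoc, hFsmul, hFsmul] at e5
    have e6 := congrArg (fun z => c • (c • z)) (hD i' j' hij' b)
    simp only [smul_sub, smul_zero] at e6
    rw [smul_comm c n, smul_comm c n] at e6
    have comb := congrArg₂ (fun x y => y - x) e5 e6
    simp only [sub_zero] at comb
    apply smul_cancel hscal1
    rw [sub_smul, mul_smul, ← comb]
    abel
  -- F (E b) = n • (E b * F 1)
  have hFeq : ∀ (i' j' : Fin m), i' ≠ j' → ∀ b : D,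
      F (Matrix.single i' j' b)
        = n • (Matrix.single i' j' b * F 1) := by
    intro i' j' hij' b
    have e := hD i' j' hij' b
    rw [hGzero i' j' hij' b, sub_zero] at e
    exact sub_eq_zero.mp e
  -- value of F (c⁻¹ • 1)
  have hGc1 : G (c • (1 : Matrix (Fin m) (Fin m) D)) = -(c • F 1) := by
    rw [hGsmul 1, hG1, smul_neg]
  have hF1val : F (c⁻¹ • (1 : Matrix (Fin m) (Fin m) D)) = (c⁻¹) ^ n • (c • F 1) := by
    have m0 := master_eq F G hFG hij01 c⁻¹ (inv_ne_zero hc) comm' 0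
    simp only [mul_zero, Matrix.single_zero, map_zero, zero_mul, mul_zero,
      smul_zero, sub_zero, add_zero, inv_inv] at m0
    rw [hGc1, smul_neg, ← sub_eq_add_neg] at m0
    exact sub_eq_zero.mp m0
  -- scalar fact for the last step
  have hscal2 : c⁻¹ - (c⁻¹) ^ n * c ≠ 0 := by
    rw [sub_ne_zero]
    intro heq
    apply htpow
    have h1 : c ^ n * c⁻¹ = c ^ n * ((c⁻¹) ^ n * c) := by rw [← heq]
    rw [inv_pow, mul_inv_cancel_left₀ hcn] at h1
    have h2 : c ^ (n - 1) = c := by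
      calc c ^ (n - 1) = c ^ (n - 1) * (c * c⁻¹) := by rw [mul_inv_cancel₀ hc, mul_one]
        _ = c ^ n * c⁻¹ := by
            rw [← mul_assoc, ← pow_succ, show (n - 1) + 1 = n by omega]
        _ = c := h1
    have h3 : c ^ (n - 2) * c = 1 * c := by
      rw [one_mul, ← pow_succ, show (n - 2) + 1 = n - 1 by omega]
      exact h2
    exact mul_right_cancel₀ hc h3
  -- E b * F 1 = 0
  have hEF : ∀ (i' j' : Fin m), i' ≠ j' → ∀ b : D,
      Matrix.single i' j' b * F 1 = 0 := by
    intro i' j' hij' b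
    have e := master_eq F G hFG hij' c⁻¹ (inv_ne_zero hc) comm' b
    simp only [inv_inv] at e
    rw [hGc1, hGzero i' j' hij' (c * b), hF1val] at e
    rw [hFeq i' j' hij' (c⁻¹ * b), ← hEsmul i' j' c⁻¹ b, smul_mul_assoc] at e
    rw [mul_neg, mul_smul_central comm] at e
    simp only [smul_neg, smul_zero, sub_zero, mul_zero] at e
    have key : (n • (c⁻¹ • (Matrix.single i' j' b * F 1)))
        - (n • ((c⁻¹) ^ n • (c • (Matrix.single i' j' b * F 1)))) = 0 := by
      rw [← e]
      abel
    rw [← Nat.cast_smul_eq_nsmul D n (c⁻¹ • _), ← Nat.cast_smul_eq_nsmul D n ((c⁻¹) ^ n • _),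
      ← smul_sub] at key
    have key2 := smul_cancel hnD key
    rw [smul_smul, ← sub_smul] at key2
    exact smul_cancel hscal2 key2
  -- F 1 = 0
  have hF1 : F 1 = 0 := by
    haveI : Nontrivial (Fin m) :=
      ⟨⟨⟨0, by omega⟩, ⟨1, by omega⟩, by simp [Fin.ext_iff]⟩⟩
    ext r s
    obtain ⟨i', hi'⟩ := exists_ne r
    have h2 := congrFun (congrFun (hEF i' r hi' 1) i') s
    simp only [Matrix.single_mul_apply_same, one_mul, Matrix.zero_apply] at h2 ⊢
    exact h2
  -- conclusion
  intro β i j hij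
  refine ⟨?_, hGzero i j hij β⟩
  have := hFeq i j hij β
  rw [hF1, mul_zero, smul_zero] at this
  exact this
end
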